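/- Let $G$ be a discrete group acting on the $\sigma$-finite measure space $(\Omega,\mu)$ by measure-class-preserving measurable bijections $\alpha_g$, and define $(T_gf)(x)=f(\alpha_g^{-1}(x))$ on $D=L^\infty_\mu(\Omega,E)$. Let $V_g$ be the shifts of $H=\ell^\infty(G,D)$ and $\bar a$ the twisted multiplications $(\bar a\xi)(g)=\hat T_g(a)\xi(g)$. If the action is metrically free, then for every finite $F\subset G$ and $a_g\in L^\infty_\mu(\Omega,L(E))$: $\big\|\sum_{g\in F}a_gT_g\big\|_{L(D)} = \big\|\sum_{g\in F}\bar a_gV_g\big\|_{L(H)}$, without any amenability assumption on $G$. -/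

import Mathlib

/-!
The map `f ↦ (T_g f)_g` embeds `D` contractively into `ℓ^∞(G, D)` and intertwines
`∑ a_g T_g` with the coordinate at `1` of `∑ ā_g V_g`; hence `‖∑ a_g T_g‖ ≤ ‖∑ ā_g V_g‖`.

Conversely, transported by `α_g`, the `g`-th coordinate of `(∑ ā_{g₀} V_{g₀}) ξ` is
`x ↦ ∑ a_{g₀}(x) η_{g₀}(x)` with `η_{g₀} = ξ(g g₀) ∘ α_g`. If this has norm `≥ r` on a set `Δ` of
positive measure, metric freeness shrinks `Δ` to `Δ'` whose translates `α_{g₀}⁻¹ Δ'` are almost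
disjoint. Gluing `η_{g₀} ∘ α_{g₀}` on these translates gives `f ∈ D` with `‖f‖ ≤ ‖ξ‖` such that
`(∑ a_{g₀} T_{g₀}) f` coincides with that sum on `Δ'`, so `r ≤ ‖∑ a_g T_g‖ ‖ξ‖`.
-/

open MeasureTheory
open scoped ENNReal

/-- Metrically free action (see the paper, §2). -/
def MetricallyFree {Ω : Type*} [MeasurableSpace Ω] (μ : Measure Ω)
    {G : Type*} (α : G → Ω → Ω) : Prop :=
  ∀ (S : Finset G) (Δ : Set Ω), MeasurableSet Δ → 0 < μ Δ →
    ∃ Δ' : Set Ω, MeasurableSet Δ' ∧ Δ' ⊆ Δ ∧ 0 < μ Δ' ∧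
      ∀ g ∈ S, ∀ h ∈ S, g ≠ h → μ (α g '' Δ' ∩ α h '' Δ') = 0

open Function Measure

namespace MeasureTheory.Lp

variable {Ω E : Type*} [MeasurableSpace Ω] {μ : Measure Ω} [NormedAddCommGroup E]

theorem norm_top_le_of_ae_bound {f : Lp E ∞ μ} {C : ℝ} (hC : 0 ≤ C)
    (h : ∀ᵐ x ∂μ, ‖f x‖ ≤ C) : ‖f‖ ≤ C := by
  rw [Lp.norm_def, eLpNorm_exponent_top]
  exact ENNReal.toReal_le_of_le_ofReal hC (eLpNormEssSup_le_of_ae_bound h)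

theorem ae_norm_le_norm_top (f : Lp E ∞ μ) : ∀ᵐ x ∂μ, ‖f x‖ ≤ ‖f‖ := by
  have hne : eLpNormEssSup (⇑f) μ ≠ ∞ := by
    rw [← eLpNorm_exponent_top]
    exact Lp.eLpNorm_ne_top f
  filter_upwards [enorm_ae_le_eLpNormEssSup (⇑f) μ] with x hx
  simpa [Lp.norm_def, eLpNorm_exponent_top, toReal_enorm] using ENNReal.toReal_mono hne hx

theorem le_norm_top_of_ae_le_norm {f : Lp E ∞ μ} {s : Set Ω} (hs : μ s ≠ 0) {r : ℝ}
    (h : ∀ᵐ x ∂μ, x ∈ s → r ≤ ‖f x‖) : r ≤ ‖f‖ := by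
  by_contra! hlt
  refine hs (measure_eq_zero_iff_ae_notMem.2 ?_)
  filter_upwards [h, ae_norm_le_norm_top f] with x hr hf hxs
  exact (hr hxs).not_gt (hf.trans_lt hlt)

theorem measure_lt_norm_pos_top (f : Lp E ∞ μ) {r : ℝ} (hr : 0 ≤ r) (hrf : r < ‖f‖) :
    0 < μ {x | r < ‖f x‖} := by
  refine pos_iff_ne_zero.2 fun h0 => hrf.not_ge (norm_top_le_of_ae_bound hr ?_)
  rw [ae_iff]
  simpa only [not_le] using h0

theorem exists_top_piecewise_of_aedisjoint {ι : Type*} [Finite ι] {S : ι → Set Ω}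
    (hS : ∀ i, MeasurableSet (S i)) (hd : Pairwise (AEDisjoint μ on S)) {w : ι → Ω → E}
    (hw : ∀ i, AEStronglyMeasurable (w i) μ) {c : ℝ} (hc : 0 ≤ c)
    (hwc : ∀ i, ∀ᵐ x ∂μ, ‖w i x‖ ≤ c) :
    ∃ f : Lp E ∞ μ, ‖f‖ ≤ c ∧ ∀ i, ∀ᵐ x ∂μ, x ∈ S i → f x = w i x := by
  have := Fintype.ofFinite ι
  obtain ⟨t, ht, ht0, hdisj⟩ := exists_null_pairwise_disjoint_sdiff hd
  let f₀ : Ω → E := fun x => ∑ i, (S i \ t i).indicator (w i) x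
  have hf₀ : ∀ i, ∀ x ∈ S i \ t i, f₀ x = w i x := fun i x hx => by
    simp only [f₀]
    rw [Finset.sum_eq_single i (fun j _ hji => Set.indicator_of_notMem
      (Set.disjoint_left.1 (hdisj hji.symm) hx) _) (by simp), Set.indicator_of_mem hx]
  have hbound : ∀ᵐ x ∂μ, ‖f₀ x‖ ≤ c := by
    filter_upwards [ae_all_iff.2 hwc] with x hx
    by_cases h : ∃ i, x ∈ S i \ t i
    · obtain ⟨i, hi⟩ := h
      rw [hf₀ i x hi]
      exact hx i
    · push Not at h
      simpa [f₀, Set.indicator_of_notMem (h _)] using hc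
  have hmem : MemLp f₀ ∞ μ := memLp_top_of_bound
    (Finset.aestronglyMeasurable_fun_sum _ fun i _ => (hw i).indicator ((hS i).diff (ht i)))
    c hbound
  refine ⟨hmem.toLp f₀, norm_top_le_of_ae_bound hc ?_, fun i => ?_⟩
  · filter_upwards [hmem.coeFn_toLp, hbound] with x hx hb
    rwa [hx]
  · filter_upwards [hmem.coeFn_toLp, measure_eq_zero_iff_ae_notMem.1 (ht0 i)] with x hx hxt hxS
    rw [hx, hf₀ i x ⟨hxS, hxt⟩]

end MeasureTheory.Lp

section Orbit

variable {ι 𝕜 D : Type*} [NontriviallyNormedField 𝕜] [NormedAddCommGroup D] [NormedSpace 𝕜 D]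

def lpOrbit (T : ι → D ≃ₗᵢ[𝕜] D) (f : D) : lp (fun _ : ι => D) ∞ :=
  ⟨fun i => T i f, memℓp_infty ⟨‖f‖, by rintro - ⟨i, rfl⟩; simp⟩⟩

@[simp]
theorem lpOrbit_apply (T : ι → D ≃ₗᵢ[𝕜] D) (f : D) (i : ι) : lpOrbit T f i = T i f :=
  rfl

theorem norm_lpOrbit_le (T : ι → D ≃ₗᵢ[𝕜] D) (f : D) : ‖lpOrbit T f‖ ≤ ‖f‖ :=
  lp.norm_le_of_forall_le (norm_nonneg f) fun i => ((T i).norm_map f).le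

theorem opNorm_le_of_apply_eq_lpOrbit (T : ι → D ≃ₗᵢ[𝕜] D) (B : D →L[𝕜] D)
    (bbar : lp (fun _ : ι => D) ∞ →L[𝕜] lp (fun _ : ι => D) ∞) (i : ι)
    (h : ∀ f, B f = bbar (lpOrbit T f) i) : ‖B‖ ≤ ‖bbar‖ :=
  B.opNorm_le_bound (norm_nonneg bbar) fun f => calc
    ‖B f‖ ≤ ‖bbar (lpOrbit T f)‖ := h f ▸ lp.norm_apply_le_norm ENNReal.top_ne_zero _ i
    _ ≤ ‖bbar‖ * ‖lpOrbit T f‖ := bbar.le_opNorm _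
    _ ≤ ‖bbar‖ * ‖f‖ := by gcongr; exact norm_lpOrbit_le T f

end Orbit

section Action

variable {Ω : Type*} [MeasurableSpace Ω] {G : Type*} [Group G] {α : G → Ω ≃ᵐ Ω}

theorem one_apply_of_mul_apply (hα : ∀ g h x, α (g * h) x = α g (α h x)) (x : Ω) :
    α 1 x = x :=
  (α 1).injective (by rw [← hα, mul_one])

theorem symm_apply_eq_inv_apply (hα : ∀ g h x, α (g * h) x = α g (α h x)) (g : G) (x : Ω) :
    (α g).symm x = α g⁻¹ x :=
  (α g).injective (by
    rw [MeasurableEquiv.apply_symm_apply, ← hα, mul_inv_cancel, one_apply_of_mul_apply hα])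

theorem MetricallyFree.exists_pairwise_aedisjoint_preimage {μ : Measure Ω}
    (hα : ∀ g h x, α (g * h) x = α g (α h x)) (hfree : MetricallyFree μ fun g => (α g : Ω → Ω))
    (F : Finset G) {Δ : Set Ω} (hΔ : MeasurableSet Δ) (hΔpos : 0 < μ Δ) :
    ∃ Δ' ⊆ Δ, MeasurableSet Δ' ∧ 0 < μ Δ' ∧
      Pairwise (AEDisjoint μ on fun g : F => α g ⁻¹' Δ') := by
  classical
  obtain ⟨Δ', hΔ'm, hsub, hpos, hdisj⟩ := hfree (F.image (·⁻¹)) Δ hΔ hΔpos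
  have himage : ∀ g : G, (α g⁻¹ : Ω → Ω) '' Δ' = α g ⁻¹' Δ' := fun g => by
    rw [← (α g).image_symm]
    congr 1
    funext x
    exact (symm_apply_eq_inv_apply hα g x).symm
  refine ⟨Δ', hsub, hΔ'm, hpos, fun g h hne => ?_⟩
  have := hdisj g⁻¹ (F.mem_image_of_mem _ g.2) h⁻¹ (F.mem_image_of_mem _ h.2)
    (inv_injective.ne (Subtype.coe_injective.ne hne))
  rwa [himage, himage] at this

end Action

section TwistedSum

variable {Ω : Type*} [MeasurableSpace Ω] {μ : Measure Ω}
  {E : Type*} [NormedAddCommGroup E] [NormedSpace ℝ E]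
  {G : Type*} {α : G → Ω ≃ᵐ Ω} {F : Finset G} {a : G → Ω → E →L[ℝ] E}

theorem sum_comp_apply_ae_eq {T : G → Lp E ∞ μ ≃ₗᵢ[ℝ] Lp E ∞ μ}
    (hT : ∀ g f, (T g f : Ω → E) =ᵐ[μ] fun x => f ((α g).symm x))
    {M : G → Lp E ∞ μ →L[ℝ] Lp E ∞ μ}
    (hM : ∀ g f, (M g f : Ω → E) =ᵐ[μ] fun x => a g x (f x)) (f : Lp E ∞ μ) :
    ⇑((∑ g ∈ F, (M g).comp ((T g).toContinuousLinearEquiv : Lp E ∞ μ →L[ℝ] Lp E ∞ μ)) f)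
      =ᵐ[μ] fun x => ∑ g ∈ F, a g x (f ((α g).symm x)) := by
  rw [_root_.sum_apply]
  filter_upwards [Lp.coeFn_fun_finsetSum F fun g => M g (T g f),
    F.eventually_all.2 fun g _ => hM g (T g f), F.eventually_all.2 fun g _ => hT g f]
    with x hsum hM hT
  exact hsum.trans (Finset.sum_congr rfl fun g hg => by rw [hM g hg, hT g hg])

variable [Group G]

theorem apply_eq_apply_lpOrbit_one (hα : ∀ g h x, α (g * h) x = α g (α h x))
    {T : G → Lp E ∞ μ ≃ₗᵢ[ℝ] Lp E ∞ μ}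
    (hT : ∀ g f, (T g f : Ω → E) =ᵐ[μ] fun x => f ((α g).symm x))
    {B : Lp E ∞ μ →L[ℝ] Lp E ∞ μ}
    (hB : ∀ f : Lp E ∞ μ, ⇑(B f) =ᵐ[μ] fun x => ∑ g ∈ F, a g x (f ((α g).symm x)))
    {bbar : lp (fun _ : G => Lp E ∞ μ) ∞ →L[ℝ] lp (fun _ : G => Lp E ∞ μ) ∞}
    (hbbar : ∀ ξ g, ((bbar ξ) g : Ω → E) =ᵐ[μ]
      fun x => ∑ g₀ ∈ F, a g₀ ((α g).symm x) ((ξ (g * g₀) : Ω → E) x))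
    (f : Lp E ∞ μ) : B f = bbar (lpOrbit T f) 1 := by
  refine Lp.ext ((hB f).trans (Filter.EventuallyEq.trans ?_ (hbbar _ 1).symm))
  filter_upwards [F.eventually_all.2 fun g _ => hT g f] with x hT
  refine Finset.sum_congr rfl fun g hg => ?_
  rw [← hT g hg, symm_apply_eq_inv_apply hα 1, inv_one, one_apply_of_mul_apply hα,
    lpOrbit_apply, one_mul]

theorem MetricallyFree.le_opNorm_mul_of_le_norm_sum (hα : ∀ g h x, α (g * h) x = α g (α h x))
    (hqmp : ∀ g, QuasiMeasurePreserving (α g) μ μ)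
    (hqmp_symm : ∀ g, QuasiMeasurePreserving (α g).symm μ μ)
    (hfree : MetricallyFree μ fun g => (α g : Ω → Ω)) {B : Lp E ∞ μ →L[ℝ] Lp E ∞ μ}
    (hB : ∀ f : Lp E ∞ μ, ⇑(B f) =ᵐ[μ] fun x => ∑ g ∈ F, a g x (f ((α g).symm x)))
    {η : G → Ω → E} (hη : ∀ g, AEStronglyMeasurable (η g) μ) {c : ℝ} (hc : 0 ≤ c)
    (hηc : ∀ g, ∀ᵐ x ∂μ, ‖η g x‖ ≤ c) {Δ : Set Ω} (hΔ : MeasurableSet Δ) (hΔpos : 0 < μ Δ)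
    {r : ℝ} (hr : ∀ᵐ x ∂μ, x ∈ Δ → r ≤ ‖∑ g ∈ F, a g x (η g x)‖) :
    r ≤ ‖B‖ * c := by
  obtain ⟨Δ', hsub, hΔ'm, hpos, hdisj⟩ :=
    hfree.exists_pairwise_aedisjoint_preimage hα F hΔ hΔpos
  obtain ⟨f, hfc, hf⟩ := Lp.exists_top_piecewise_of_aedisjoint
    (fun g : F => (α g).measurable hΔ'm) hdisj (w := fun g z => η g (α g z))
    (fun g => (hη g).comp_quasiMeasurePreserving (hqmp g)) hc fun g => (hqmp g).ae (hηc g)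
  have hfη : ∀ᵐ x ∂μ, x ∈ Δ' → ∀ g ∈ F, f ((α g).symm x) = η g x := by
    filter_upwards [ae_all_iff.2 fun g : F => (hqmp_symm g).ae (hf g)] with x hx hxΔ' g hg
    simpa using hx ⟨g, hg⟩ (by simpa using hxΔ')
  calc r ≤ ‖B f‖ := Lp.le_norm_top_of_ae_le_norm hpos.ne' (by
        filter_upwards [hr, hB f, hfη] with x hr hBx hfx hx
        rw [hBx, Finset.sum_congr rfl fun g hg => by rw [hfx hx g hg]]
        exact hr (hsub hx))
    _ ≤ ‖B‖ * ‖f‖ := B.le_opNorm f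
    _ ≤ ‖B‖ * c := by gcongr

theorem MetricallyFree.opNorm_le (hα : ∀ g h x, α (g * h) x = α g (α h x))
    (hqmp : ∀ g, QuasiMeasurePreserving (α g) μ μ)
    (hqmp_symm : ∀ g, QuasiMeasurePreserving (α g).symm μ μ)
    (hfree : MetricallyFree μ fun g => (α g : Ω → Ω)) {B : Lp E ∞ μ →L[ℝ] Lp E ∞ μ}
    (hB : ∀ f : Lp E ∞ μ, ⇑(B f) =ᵐ[μ] fun x => ∑ g ∈ F, a g x (f ((α g).symm x)))
    {bbar : lp (fun _ : G => Lp E ∞ μ) ∞ →L[ℝ] lp (fun _ : G => Lp E ∞ μ) ∞}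
    (hbbar : ∀ ξ g, ((bbar ξ) g : Ω → E) =ᵐ[μ]
      fun x => ∑ g₀ ∈ F, a g₀ ((α g).symm x) ((ξ (g * g₀) : Ω → E) x)) :
    ‖bbar‖ ≤ ‖B‖ := by
  refine bbar.opNorm_le_bound (norm_nonneg B) fun ξ =>
    lp.norm_le_of_forall_le (by positivity) fun g => le_of_forall_lt_imp_le_of_dense fun r hr => ?_
  rcases lt_or_ge r 0 with hr0 | hr0
  · exact hr0.le.trans (by positivity)
  let u := bbar ξ g
  let M := {x | r < ‖u x‖}
  have hM : MeasurableSet M :=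
    measurableSet_lt measurable_const (Lp.stronglyMeasurable u).norm.measurable
  have hMpos : 0 < μ (α g ⁻¹' M) := pos_iff_ne_zero.2 fun h0 =>
    (Lp.measure_lt_norm_pos_top u hr0 hr).ne' (by simpa using (hqmp_symm g).preimage_null h0)
  refine hfree.le_opNorm_mul_of_le_norm_sum hα hqmp hqmp_symm hB
    (η := fun g₀ y => ξ (g * g₀) (α g y))
    (fun g₀ => (Lp.aestronglyMeasurable _).comp_quasiMeasurePreserving (hqmp g)) (norm_nonneg ξ)
    (fun g₀ => (hqmp g).ae ((Lp.ae_norm_le_norm_top _).mono fun x hx =>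
      hx.trans (lp.norm_apply_le_norm ENNReal.top_ne_zero ξ _)))
    ((α g).measurable hM) hMpos ?_
  filter_upwards [(hqmp g).ae (hbbar ξ g)] with x hx hxM
  rw [(α g).symm_apply_apply] at hx
  exact hx ▸ hxM.le

end TwistedSum

theorem stmt17_general {Ω : Type*} [MeasurableSpace Ω] (μ : Measure Ω)
    {E : Type*} [NormedAddCommGroup E] [NormedSpace ℝ E]
    {G : Type*} [Group G]
    (α : G → Ω ≃ᵐ Ω)
    (hgrp : ∀ g h x, α (g * h) x = α g (α h x))
    (hclass : ∀ g : G, μ.map (α g) ≪ μ ∧ μ ≪ μ.map (α g))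
    (hfree : MetricallyFree μ fun g => (α g : Ω → Ω))
    (T : G → (Lp E ⊤ μ ≃ₗᵢ[ℝ] Lp E ⊤ μ))
    (hT : ∀ (g : G) (f : Lp E ⊤ μ),
      (T g f : Ω → E) =ᵐ[μ] fun x => f ((α g).symm x))
    (F : Finset G) (a : G → Ω → (E →L[ℝ] E))
    (Mop : G → (Lp E ⊤ μ →L[ℝ] Lp E ⊤ μ))
    (hMop : ∀ (g : G) (f : Lp E ⊤ μ),
      (Mop g f : Ω → E) =ᵐ[μ] fun x => a g x (f x))
    (bbar : lp (fun _ : G => Lp E ⊤ μ) ⊤ →L[ℝ] lp (fun _ : G => Lp E ⊤ μ) ⊤)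
    (hbbar : ∀ (ξ : lp (fun _ : G => Lp E ⊤ μ) ⊤) (g : G),
      ((bbar ξ) g : Ω → E) =ᵐ[μ]
        fun x => ∑ g₀ ∈ F, a g₀ ((α g).symm x) ((ξ (g * g₀) : Ω → E) x)) :
    ‖∑ g ∈ F, (Mop g).comp
        ((T g).toContinuousLinearEquiv : Lp E ⊤ μ →L[ℝ] Lp E ⊤ μ)‖ = ‖bbar‖ := by
  have hqmp g : QuasiMeasurePreserving (α g) μ μ := ⟨(α g).measurable, (hclass g).1⟩
  have hqmp_symm g : QuasiMeasurePreserving (α g).symm μ μ :=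
    ((α g).quasiMeasurePreserving_symm μ).mono_left (hclass g).2
  have hB := sum_comp_apply_ae_eq (F := F) hT hMop
  exact le_antisymm
    (opNorm_le_of_apply_eq_lpOrbit T _ bbar 1 (apply_eq_apply_lpOrbit_one hgrp hT hB hbbar))
    (hfree.opNorm_le hgrp hqmp hqmp_symm hB hbbar)

/-- `G` a discrete group acting on the σ-finite space `(Ω, μ)` by
measure-class-preserving measurable bijections `α g`, `(T_g f)(x) = f(α_g⁻¹ x)` on
`D = L^∞_μ(Ω, E)`, and `b̄ = ∑_{g∈F} ā_g V_g` the corresponding regular representation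
operator on `H = ℓ^∞(G, D)`, acting by
`(b̄ ξ)(g)(x) = ∑_{g₀∈F} a_{g₀}(α_g⁻¹ x)(ξ(g g₀)(x))` a.e.  If the action is metrically
free then `‖∑_{g∈F} a_g T_g‖_{L(D)} = ‖b̄‖_{L(H)}`, without any amenability assumption. -/
theorem stmt17 {Ω : Type*} [MeasurableSpace Ω] (μ : Measure Ω) [SigmaFinite μ]
    {E : Type*} [NormedAddCommGroup E] [NormedSpace ℝ E] [CompleteSpace E]
    {G : Type*} [Group G]
    (α : G → Ω ≃ᵐ Ω)
    (hgrp : ∀ g h x, α (g * h) x = α g (α h x))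
    (hclass : ∀ g : G, μ.map (α g) ≪ μ ∧ μ ≪ μ.map (α g))
    (hfree : MetricallyFree μ fun g => (α g : Ω → Ω))
    (T : G → (Lp E ⊤ μ ≃ₗᵢ[ℝ] Lp E ⊤ μ))
    (hT : ∀ (g : G) (f : Lp E ⊤ μ),
      (T g f : Ω → E) =ᵐ[μ] fun x => f ((α g).symm x))
    (F : Finset G) (a : G → Ω → (E →L[ℝ] E))
    (ha : ∀ g, ∃ C : ℝ, ∀ᵐ x ∂μ, ‖a g x‖ ≤ C)
    (Mop : G → (Lp E ⊤ μ →L[ℝ] Lp E ⊤ μ))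
    (hMop : ∀ (g : G) (f : Lp E ⊤ μ),
      (Mop g f : Ω → E) =ᵐ[μ] fun x => a g x (f x))
    (bbar : lp (fun _ : G => Lp E ⊤ μ) ⊤ →L[ℝ] lp (fun _ : G => Lp E ⊤ μ) ⊤)
    (hbbar : ∀ (ξ : lp (fun _ : G => Lp E ⊤ μ) ⊤) (g : G),
      ((bbar ξ) g : Ω → E) =ᵐ[μ]
        fun x => ∑ g₀ ∈ F, a g₀ ((α g).symm x) ((ξ (g * g₀) : Ω → E) x)) :
    ‖∑ g ∈ F, (Mop g).comp
        ((T g).toContinuousLinearEquiv : Lp E ⊤ μ →L[ℝ] Lp E ⊤ μ)‖ = ‖bbar‖ :=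
  stmt17_general μ α hgrp hclass hfree T hT F a Mop hMop bbar hbbar
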